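/- arXiv:1904.02204 — 2 statements merged into one kernel-verified Lean document; each statement's English description precedes it below -/
import Mathlib

section
/- Let p₁,…,p_n, q₁,…,q_n ∈ ℝ^d, and define F(r) = min_π (1/n) Σ_i ‖exp([r]) p_i − q_{π(i)}‖² where the minimum is over permutations π and [r] is the skew-symmetric matrix determined by r ∈ ℝ^s. Suppose r* = 0 is a global minimizer of F attained with permutation π*. Then for all r with ‖r‖ ≤ δ: F(r) − F(0) ≤ (2/n) σ_P σ_Q ψ₂(δ), where ψ₂(δ) = e^δ − 1 − δ, σ_P = (Σ_i ‖p_i‖²)^{1/2}, σ_Q = (Σ_i ‖q_i‖²)^{1/2}. -/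
open scoped BigOperators RealInnerProductSpace
open Matrix

noncomputable def mulVecE {d : ℕ} (A : Matrix (Fin d) (Fin d) ℝ)
    (p : EuclideanSpace ℝ (Fin d)) : EuclideanSpace ℝ (Fin d) :=
  Matrix.toEuclideanLin A p

def bracket {d s : ℕ} (e : {p : Fin d × Fin d // p.2 < p.1} ≃ Fin s)
    (r : EuclideanSpace ℝ (Fin s)) : Matrix (Fin d) (Fin d) ℝ :=
  fun i j =>
    if h : j < i then r (e ⟨(i, j), h⟩)
    else if h' : i < j then -r (e ⟨(j, i), h'⟩) else 0

noncomputable def psi (k : ℕ) (x : ℝ) : ℝ :=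
  Real.exp x - ∑ j ∈ Finset.range k, x ^ j / (Nat.factorial j : ℝ)

/-- The rigid-bijective energy `E(r, π) = (1/n) Σ_i ‖exp([r]) p_i − q_{π(i)}‖²`. -/
noncomputable def Ebi {d s n : ℕ} (e : {p : Fin d × Fin d // p.2 < p.1} ≃ Fin s)
    (p q : Fin n → EuclideanSpace ℝ (Fin d))
    (r : EuclideanSpace ℝ (Fin s)) (π : Equiv.Perm (Fin n)) : ℝ :=
  (1 / (n : ℝ)) * ∑ i, ‖mulVecE (NormedSpace.exp (bracket e r)) (p i) - q (π i)‖ ^ 2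

/-!
Write `f(r) = Σ_i ⟪exp([r]) p_i, q_{π*(i)}⟫`. Since `exp([r])` is orthogonal, the energy of
`(r, π*)` is a constant minus `(2/n) f(r)`, so `F(r) - F(0) ≤ (2/n) (f(0) - f(r))` and `f` is
maximal at `0`. Expanding `exp([r]) = 1 + [r] + R`, the linear term `Σ_i ⟪[r] p_i, q_{π*(i)}⟫`
vanishes because `t ↦ f(t r)` has a critical point at `0`, while `‖R‖ ≤ ψ₂(‖[r]‖)` and
Cauchy–Schwarz bound the remainder by `ψ₂(‖[r]‖) σ_P σ_Q`. Finally `‖[r]‖ ≤ ‖r‖ ≤ δ`: for a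
skew-symmetric matrix `M`, `2 ⟪M x, y⟫ = Σ_{i,j} M_ij (x_j y_i - x_i y_j)`, and Lagrange's
identity bounds the second factor.
-/

open NormedSpace Nat

section ExpTail

variable {𝔸 : Type*} [NormedRing 𝔸] [NormedAlgebra ℝ 𝔸] [CompleteSpace 𝔸]

theorem exp_sub_sum_range_eq_tsum (x : 𝔸) (k : ℕ) :
    exp x - ∑ j ∈ Finset.range k, (j !⁻¹ : ℝ) • x ^ j =
      ∑' n, ((n + k)!⁻¹ : ℝ) • x ^ (n + k) := by
  rw [congrFun (exp_eq_tsum ℝ) x, ← (expSeries_summable' (𝕂 := ℝ) x).sum_add_tsum_nat_add k,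
    add_sub_cancel_left]

theorem psi_eq_tsum (k : ℕ) (x : ℝ) : psi k x = ∑' n, x ^ (n + k) / (n + k)! := by
  have := exp_sub_sum_range_eq_tsum x k
  simp only [smul_eq_mul, ← Real.exp_eq_exp_ℝ] at this
  simpa [psi, div_eq_inv_mul] using this

theorem norm_exp_sub_sum_range_le_psi (x : 𝔸) {k : ℕ} (hk : 0 < k) :
    ‖exp x - ∑ j ∈ Finset.range k, (j !⁻¹ : ℝ) • x ^ j‖ ≤ psi k ‖x‖ := by
  have hsum : Summable fun n => ‖((n + k)!⁻¹ : ℝ) • x ^ (n + k)‖ :=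
    (summable_nat_add_iff k).2 (norm_expSeries_summable' (𝕂 := ℝ) x)
  rw [exp_sub_sum_range_eq_tsum, psi_eq_tsum]
  refine (norm_tsum_le_tsum_norm hsum).trans (hsum.tsum_le_tsum (fun n => ?_) ?_)
  · rw [norm_smul, div_eq_inv_mul, norm_inv, Real.norm_natCast]
    gcongr
    exact norm_pow_le' x (by omega)
  · exact (summable_nat_add_iff k).2 (Real.summable_pow_div_factorial ‖x‖)

end ExpTail

theorem psi_le_psi {k : ℕ} {x y : ℝ} (hx : 0 ≤ x) (hxy : x ≤ y) : psi k x ≤ psi k y := by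
  rw [psi_eq_tsum, psi_eq_tsum]
  refine ((summable_nat_add_iff k).2 (Real.summable_pow_div_factorial x)).tsum_le_tsum
    (fun n => ?_) ((summable_nat_add_iff k).2 (Real.summable_pow_div_factorial y))
  gcongr

section InnerSums

variable {E : Type*} [NormedAddCommGroup E] [InnerProductSpace ℝ E] {ι : Type*} [Fintype ι]

theorem abs_sum_inner_apply_le (T : E →L[ℝ] E) (p q : ι → E) :
    |∑ i, ⟪T (p i), q i⟫| ≤ ‖T‖ * (√(∑ i, ‖p i‖ ^ 2) * √(∑ i, ‖q i‖ ^ 2)) :=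
  calc |∑ i, ⟪T (p i), q i⟫|
      ≤ ∑ i, ‖T‖ * (‖p i‖ * ‖q i‖) := by
        refine (Finset.abs_sum_le_sum_abs _ _).trans (Finset.sum_le_sum fun i _ => ?_)
        rw [← mul_assoc]
        exact (abs_real_inner_le_norm _ _).trans (by gcongr; exact T.le_opNorm _)
    _ = ‖T‖ * ∑ i, ‖p i‖ * ‖q i‖ := (Finset.mul_sum _ _ _).symm
    _ ≤ ‖T‖ * (√(∑ i, ‖p i‖ ^ 2) * √(∑ i, ‖q i‖ ^ 2)) := by
        gcongr; exact Real.sum_mul_le_sqrt_mul_sqrt _ _ _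

theorem sum_norm_sub_sq_of_isometry {U : E →L[ℝ] E} (hU : ∀ x, ‖U x‖ = ‖x‖) (p q : ι → E) :
    ∑ i, ‖U (p i) - q i‖ ^ 2 = ∑ i, ‖p i‖ ^ 2 + ∑ i, ‖q i‖ ^ 2 - 2 * ∑ i, ⟪U (p i), q i⟫ := by
  simp only [norm_sub_sq_real, hU, Finset.sum_add_distrib, Finset.sum_sub_distrib, Finset.mul_sum]
  ring

variable [CompleteSpace E]

theorem norm_exp_apply_of_mem_skewAdjoint {A : E →L[ℝ] E} (hA : A ∈ skewAdjoint (E →L[ℝ] E))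
    (x : E) : ‖exp A x‖ = ‖x‖ := by
  let : NormedAlgebra ℚ (E →L[ℝ] E) := .restrictScalars ℚ ℝ _
  have hU := exp_mem_unitary_of_mem_skewAdjoint hA
  exact ContinuousLinearMap.norm_map_of_mem_unitary hU x

theorem hasDerivAt_sum_inner_exp_smul_apply (A : E →L[ℝ] E) (p q : ι → E) :
    HasDerivAt (fun t : ℝ => ∑ i, ⟪exp (t • A) (p i), q i⟫) (∑ i, ⟪A (p i), q i⟫) 0 := by
  have hexp : HasDerivAt (fun t : ℝ => exp (t • A)) A 0 := by
    simpa using hasDerivAt_exp_smul_const (𝕂 := ℝ) A 0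
  refine HasDerivAt.fun_sum fun i _ => ?_
  simpa using (hexp.clm_apply (hasDerivAt_const 0 (p i))).inner ℝ (hasDerivAt_const 0 (q i))

theorem sum_inner_apply_eq_zero_of_le (A : E →L[ℝ] E) (p q : ι → E)
    (hmax : ∀ t : ℝ, ∑ i, ⟪exp (t • A) (p i), q i⟫ ≤ ∑ i, ⟪p i, q i⟫) :
    ∑ i, ⟪A (p i), q i⟫ = 0 := by
  refine IsLocalMax.hasDerivAt_eq_zero (Filter.Eventually.of_forall fun t => ?_)
    (hasDerivAt_sum_inner_exp_smul_apply A p q)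
  simpa using hmax t

theorem sum_inner_sub_sum_inner_exp_le (A : E →L[ℝ] E) (p q : ι → E)
    (hmax : ∀ t : ℝ, ∑ i, ⟪exp (t • A) (p i), q i⟫ ≤ ∑ i, ⟪p i, q i⟫) :
    ∑ i, ⟪p i, q i⟫ - ∑ i, ⟪exp A (p i), q i⟫ ≤
      psi 2 ‖A‖ * (√(∑ i, ‖p i‖ ^ 2) * √(∑ i, ‖q i‖ ^ 2)) := by
  have hsplit : ∑ i, ⟪exp A (p i), q i⟫ =
      ∑ i, ⟪p i, q i⟫ + ∑ i, ⟪A (p i), q i⟫ + ∑ i, ⟪(exp A - 1 - A) (p i), q i⟫ := by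
    simp only [← Finset.sum_add_distrib, ← inner_add_left]
    congr! 2 with i
    simp
  have hnorm : ‖exp A - 1 - A‖ ≤ psi 2 ‖A‖ := by
    have := norm_exp_sub_sum_range_le_psi A (k := 2) (by norm_num)
    rw [Finset.sum_range_succ, Finset.sum_range_one] at this
    simpa [sub_sub] using this
  rw [hsplit, sum_inner_apply_eq_zero_of_le A p q hmax, add_zero, sub_add_cancel_left]
  calc -∑ i, ⟪(exp A - 1 - A) (p i), q i⟫
      ≤ |∑ i, ⟪(exp A - 1 - A) (p i), q i⟫| := neg_le_abs _
    _ ≤ ‖exp A - 1 - A‖ * (√(∑ i, ‖p i‖ ^ 2) * √(∑ i, ‖q i‖ ^ 2)) :=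
        abs_sum_inner_apply_le _ p q
    _ ≤ psi 2 ‖A‖ * (√(∑ i, ‖p i‖ ^ 2) * √(∑ i, ‖q i‖ ^ 2)) := by gcongr

end InnerSums

section EuclideanMatrix

variable {ι : Type*} [Fintype ι]

theorem sum_sum_mul_sub_mul_sq (x y : ι → ℝ) :
    ∑ i, ∑ j, (x j * y i - x i * y j) ^ 2 =
      2 * ((∑ i, x i ^ 2) * (∑ i, y i ^ 2) - (∑ i, x i * y i) ^ 2) := by
  have hcross : ∑ i, ∑ j, x j * y i * (x i * y j) = (∑ i, x i * y i) ^ 2 := by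
    rw [sq, Finset.sum_mul_sum]
    exact Finset.sum_congr rfl fun i _ => Finset.sum_congr rfl fun j _ => by ring
  simp only [sub_sq, mul_pow, mul_assoc, Finset.sum_add_distrib, Finset.sum_sub_distrib,
    ← Finset.mul_sum, ← Finset.sum_mul, ← hcross]
  ring

theorem EuclideanSpace.norm_sq_eq_sum_sq (x : EuclideanSpace ℝ ι) : ‖x‖ ^ 2 = ∑ i, x i ^ 2 := by
  simp [EuclideanSpace.norm_sq_eq]

variable [DecidableEq ι]

theorem inner_toEuclideanCLM_apply (M : Matrix ι ι ℝ) (x y : EuclideanSpace ℝ ι) :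
    ⟪toEuclideanCLM (𝕜 := ℝ) M x, y⟫ = ∑ i, ∑ j, M i j * x j * y i := by
  simp only [EuclideanSpace.inner_eq_star_dotProduct, ofLp_toEuclideanCLM, star_trivial,
    Matrix.mulVec, dotProduct, Finset.mul_sum]
  exact Finset.sum_congr rfl fun i _ => Finset.sum_congr rfl fun j _ => by ring

theorem two_mul_inner_toEuclideanCLM_apply {M : Matrix ι ι ℝ} (hM : Mᵀ = -M)
    (x y : EuclideanSpace ℝ ι) :
    2 * ⟪toEuclideanCLM (𝕜 := ℝ) M x, y⟫ = ∑ i, ∑ j, M i j * (x j * y i - x i * y j) := by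
  have hswap : ∑ i, ∑ j, M i j * x j * y i = -∑ i, ∑ j, M i j * x i * y j := by
    rw [Finset.sum_comm]
    simp only [← Finset.sum_neg_distrib]
    refine Finset.sum_congr rfl fun i _ => Finset.sum_congr rfl fun j _ => ?_
    rw [← Matrix.transpose_apply M i j, hM, Matrix.neg_apply, neg_mul, neg_mul]
  rw [inner_toEuclideanCLM_apply, two_mul]
  nth_rw 2 [hswap]
  simp only [mul_sub, Finset.sum_sub_distrib, ← mul_assoc]
  ring

theorem norm_toEuclideanCLM_le_of_transpose_eq_neg {M : Matrix ι ι ℝ} (hM : Mᵀ = -M) :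
    ‖toEuclideanCLM (𝕜 := ℝ) M‖ ≤ √((∑ i, ∑ j, M i j ^ 2) / 2) := by
  refine ContinuousLinearMap.opNorm_le_of_re_inner_le (Real.sqrt_nonneg _) fun x y hx hy => ?_
  rw [RCLike.re_to_real]
  refine Real.le_sqrt_of_sq_le ?_
  have hcs := Finset.sum_mul_sq_le_sq_mul_sq Finset.univ (fun p : ι × ι => M p.1 p.2)
    (fun p => x p.2 * y p.1 - x p.1 * y p.2)
  simp only [Finset.univ_product_univ.symm, Finset.sum_product] at hcs
  rw [← two_mul_inner_toEuclideanCLM_apply hM, sum_sum_mul_sub_mul_sq,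
    ← EuclideanSpace.norm_sq_eq_sum_sq, ← EuclideanSpace.norm_sq_eq_sum_sq, hx, hy] at hcs
  nlinarith [sq_nonneg (∑ i, x i * y i), Finset.sum_nonneg fun i (_ : i ∈ Finset.univ) =>
    Finset.sum_nonneg fun j (_ : j ∈ Finset.univ) => sq_nonneg (M i j)]

theorem toEuclideanCLM_exp (M : Matrix ι ι ℝ) :
    toEuclideanCLM (𝕜 := ℝ) (exp M) = exp (toEuclideanCLM (𝕜 := ℝ) M) := by
  let : NormedRing (Matrix ι ι ℝ) := Matrix.linftyOpNormedRing
  let : NormedAlgebra ℝ (Matrix ι ι ℝ) := Matrix.linftyOpNormedAlgebra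
  let : NormedAlgebra ℚ (Matrix ι ι ℝ) := .restrictScalars ℚ ℝ _
  exact map_exp (toEuclideanCLM (𝕜 := ℝ) (n := ι))
    (toEuclideanCLM (𝕜 := ℝ) (n := ι)).toAlgEquiv.toLinearMap.continuous_of_finiteDimensional M

theorem toEuclideanCLM_mem_skewAdjoint {M : Matrix ι ι ℝ} (hM : Mᵀ = -M) :
    toEuclideanCLM (𝕜 := ℝ) M ∈ skewAdjoint (EuclideanSpace ℝ ι →L[ℝ] EuclideanSpace ℝ ι) := by
  rw [skewAdjoint.mem_iff, ← map_star, ← map_neg, star_eq_conjTranspose,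
    conjTranspose_eq_transpose_of_trivial, hM]

end EuclideanMatrix

section Bracket

variable {d s : ℕ} (e : {p : Fin d × Fin d // p.2 < p.1} ≃ Fin s)

theorem bracket_transpose (r : EuclideanSpace ℝ (Fin s)) : (bracket e r)ᵀ = -bracket e r := by
  ext i j
  simp only [Matrix.transpose_apply, Matrix.neg_apply, bracket]
  rcases lt_trichotomy i j with h | rfl | h
  · simp [h, h.not_gt]
  · simp
  · simp [h, h.not_gt]

theorem bracket_smul (t : ℝ) (r : EuclideanSpace ℝ (Fin s)) :
    bracket e (t • r) = t • bracket e r := by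
  ext i j
  simp only [bracket, Matrix.smul_apply, PiLp.smul_apply, smul_eq_mul]
  split_ifs <;> ring

theorem bracket_zero : bracket e 0 = 0 := by
  simpa using bracket_smul e 0 0

theorem sum_sum_bracket_sq (r : EuclideanSpace ℝ (Fin s)) :
    ∑ i, ∑ j, bracket e r i j ^ 2 = 2 * ‖r‖ ^ 2 := by
  set g : Fin d → Fin d → ℝ := fun i j => if h : j < i then r (e ⟨(i, j), h⟩) ^ 2 else 0
  have hsplit : ∀ i j, bracket e r i j ^ 2 = g i j + g j i := by
    intro i j
    simp only [g, bracket]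
    rcases lt_trichotomy i j with h | rfl | h
    · simp [h, h.not_gt]
    · simp
    · simp [h, h.not_gt]
  have hg : ∑ i, ∑ j, g i j = ‖r‖ ^ 2 := by
    have hoff : ∑ p : {p : Fin d × Fin d // ¬ p.2 < p.1}, g p.1.1 p.1.2 = 0 :=
      Finset.sum_eq_zero fun p _ => dif_neg p.2
    rw [← Fintype.sum_prod_type',
      ← Fintype.sum_subtype_add_sum_subtype (fun p : Fin d × Fin d => p.2 < p.1),
      EuclideanSpace.norm_sq_eq, ← e.sum_comp, hoff, add_zero]
    exact Finset.sum_congr rfl fun p _ => by simp [g, dif_pos p.2]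
  simp only [hsplit, Finset.sum_add_distrib]
  rw [Finset.sum_comm (f := fun i j => g j i), hg]
  ring

theorem norm_toEuclideanCLM_bracket_le (r : EuclideanSpace ℝ (Fin s)) :
    ‖toEuclideanCLM (𝕜 := ℝ) (bracket e r)‖ ≤ ‖r‖ := by
  have := norm_toEuclideanCLM_le_of_transpose_eq_neg (bracket_transpose e r)
  rwa [sum_sum_bracket_sq, mul_div_cancel_left₀ _ two_ne_zero, Real.sqrt_sq (norm_nonneg r)] at this

end Bracket

section Energy

variable {d s n : ℕ} (e : {p : Fin d × Fin d // p.2 < p.1} ≃ Fin s)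

theorem mulVecE_exp (M : Matrix (Fin d) (Fin d) ℝ) (x : EuclideanSpace ℝ (Fin d)) :
    mulVecE (exp M) x = exp (toEuclideanCLM (𝕜 := ℝ) M) x := by
  rw [← toEuclideanCLM_exp]
  rfl

theorem Ebi_eq_sub_sum_inner (p q : Fin n → EuclideanSpace ℝ (Fin d))
    (r : EuclideanSpace ℝ (Fin s)) (π : Equiv.Perm (Fin n)) :
    Ebi e p q r π = 1 / n * (∑ i, ‖p i‖ ^ 2 + ∑ i, ‖q i‖ ^ 2) -
      2 / n * ∑ i, ⟪exp (toEuclideanCLM (𝕜 := ℝ) (bracket e r)) (p i), q (π i)⟫ := by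
  have hiso := norm_exp_apply_of_mem_skewAdjoint
    (toEuclideanCLM_mem_skewAdjoint (bracket_transpose e r))
  simp only [Ebi, mulVecE_exp]
  rw [sum_norm_sub_sq_of_isometry hiso p (fun i => q (π i)), Equiv.sum_comp π (fun i => ‖q i‖ ^ 2)]
  ring

theorem Ebi_zero (p q : Fin n → EuclideanSpace ℝ (Fin d)) (π : Equiv.Perm (Fin n)) :
    Ebi e p q 0 π = 1 / n * (∑ i, ‖p i‖ ^ 2 + ∑ i, ‖q i‖ ^ 2) - 2 / n * ∑ i, ⟪p i, q (π i)⟫ := by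
  simp [Ebi_eq_sub_sum_inner, bracket_zero]

end Energy

theorem rigid_bijective_quasi_lower_bound_general
    {d s n : ℕ} (hn : 0 < n)
    (e : {p : Fin d × Fin d // p.2 < p.1} ≃ Fin s)
    (p q : Fin n → EuclideanSpace ℝ (Fin d))
    (πstar : Equiv.Perm (Fin n))
    (hmin : ∀ (r : EuclideanSpace ℝ (Fin s)) (π : Equiv.Perm (Fin n)),
      Ebi e p q 0 πstar ≤ Ebi e p q r π)
    (δ : ℝ) :
    ∀ r : EuclideanSpace ℝ (Fin s), ‖r‖ ≤ δ →
      (⨅ π : Equiv.Perm (Fin n), Ebi e p q r π) -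
        (⨅ π : Equiv.Perm (Fin n), Ebi e p q 0 π) ≤
        (2 / (n : ℝ)) * Real.sqrt (∑ i, ‖p i‖ ^ 2) * Real.sqrt (∑ i, ‖q i‖ ^ 2) *
          psi 2 δ := by
  intro r hr
  set A := toEuclideanCLM (𝕜 := ℝ) (bracket e r)
  have hn' : (0 : ℝ) < 2 / n := by positivity
  have hF0 : (⨅ π, Ebi e p q 0 π) = Ebi e p q 0 πstar :=
    le_antisymm (ciInf_le (Finite.bddBelow_range _) πstar) (le_ciInf fun π => hmin 0 π)
  have hFr : (⨅ π, Ebi e p q r π) ≤ Ebi e p q r πstar := ciInf_le (Finite.bddBelow_range _) πstar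
  have hmax : ∀ t : ℝ, ∑ i, ⟪exp (t • A) (p i), q (πstar i)⟫ ≤ ∑ i, ⟪p i, q (πstar i)⟫ := by
    intro t
    have := hmin (t • r) πstar
    rw [Ebi_zero, Ebi_eq_sub_sum_inner, bracket_smul, map_smul] at this
    exact le_of_mul_le_mul_left (by linarith) hn'
  have hrem := sum_inner_sub_sum_inner_exp_le A p (fun i => q (πstar i)) hmax
  rw [Equiv.sum_comp πstar (fun i => ‖q i‖ ^ 2)] at hrem
  have hψ : psi 2 ‖A‖ ≤ psi 2 δ :=
    psi_le_psi (norm_nonneg _) ((norm_toEuclideanCLM_bracket_le e r).trans hr)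
  calc (⨅ π, Ebi e p q r π) - (⨅ π, Ebi e p q 0 π)
      ≤ Ebi e p q r πstar - Ebi e p q 0 πstar := by rw [hF0]; linarith
    _ = 2 / n * (∑ i, ⟪p i, q (πstar i)⟫ - ∑ i, ⟪exp A (p i), q (πstar i)⟫) := by
        rw [Ebi_eq_sub_sum_inner, Ebi_zero]; ring
    _ ≤ 2 / n * (psi 2 δ * (√(∑ i, ‖p i‖ ^ 2) * √(∑ i, ‖q i‖ ^ 2))) := by
        gcongr
        exact hrem.trans (by gcongr)
    _ = _ := by ring

/-- Quasi-lower bound for the rigid-bijective problem at a global minimizer `r* = 0`: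
if `(0, π*)` globally minimizes `E`, then for all `r` with `‖r‖ ≤ δ`,
`F(r) − F(0) ≤ (2/n) σ_P σ_Q ψ₂(δ)` where `F(r) = min_π E(r, π)`. -/
theorem rigid_bijective_quasi_lower_bound
    {d s n : ℕ} (hn : 0 < n)
    (e : {p : Fin d × Fin d // p.2 < p.1} ≃ Fin s)
    (p q : Fin n → EuclideanSpace ℝ (Fin d))
    (πstar : Equiv.Perm (Fin n))
    (hmin : ∀ (r : EuclideanSpace ℝ (Fin s)) (π : Equiv.Perm (Fin n)),
      Ebi e p q 0 πstar ≤ Ebi e p q r π)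
    (δ : ℝ) (hδ : 0 ≤ δ) :
    ∀ r : EuclideanSpace ℝ (Fin s), ‖r‖ ≤ δ →
      (⨅ π : Equiv.Perm (Fin n), Ebi e p q r π) -
        (⨅ π : Equiv.Perm (Fin n), Ebi e p q 0 π) ≤
        (2 / (n : ℝ)) * Real.sqrt (∑ i, ‖p i‖ ^ 2) * Real.sqrt (∑ i, ‖q i‖ ^ 2) *
          psi 2 δ :=
  rigid_bijective_quasi_lower_bound_general hn e p q πstar hmin δ
end

section
/- Suppose F : ℝ^D → ℝ satisfies F(x) − F(x*) ≥ m‖x − x*‖² on a neighborhood B_η(x*) of a global minimizer x* (m > 0), and a quasi-lower bound rule lb_i = F(x_i) − M√D h_i² is used with upper bound ub satisfying ub ≤ F(x*) + M√D h_i² whenever the current cube containing x* has half-edge h_i. Then any cube C_{h_i}(x_i) ⊆ B_η(x*) with ‖x_i − x*‖_∞ > √(2MD/m) · h_i satisfies lb_i > ub, i.e., is eliminated. -/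
/-- Elimination of far cubes in quasi-BnB: under quadratic growth of `F` near the global
minimizer `x*`, a cube inside `B_η(x*)` whose center is farther than `√(2MD/m)·h` from `x*`
in the max-norm has quasi-lower bound exceeding the upper bound `ub`, hence is eliminated. -/
theorem qbnb_far_cubes_eliminated
    {D : ℕ} (hD : 1 ≤ D)
    (F : EuclideanSpace ℝ (Fin D) → ℝ) (xstar : EuclideanSpace ℝ (Fin D))
    (η m M ub h : ℝ) (hm : 0 < m) (hM : 0 < M) (hh : 0 ≤ h)
    (hgrowth : ∀ x : EuclideanSpace ℝ (Fin D), ‖x - xstar‖ < η →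
      m * ‖x - xstar‖ ^ 2 ≤ F x - F xstar)
    (xi : EuclideanSpace ℝ (Fin D))
    (hsub : ∀ x : EuclideanSpace ℝ (Fin D), (∀ k, |x k - xi k| ≤ h) → ‖x - xstar‖ < η)
    (hub : ub ≤ F xstar + M * Real.sqrt D * h ^ 2)
    (hfar : ∃ k, Real.sqrt (2 * M * D / m) * h < |xi k - xstar k|) :
    ub < F xi - M * Real.sqrt D * h ^ 2 := by
  obtain ⟨k, hk⟩ := hfar
  have hmem : ‖xi - xstar‖ < η := by
    apply hsub
    intro j
    simpa using hh
  have hgr := hgrowth xi hmem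
  have hcoord : |xi k - xstar k| ≤ ‖xi - xstar‖ := by
    have hsum : |(xi - xstar) k| ^ 2 ≤ ∑ j, |(xi - xstar) j| ^ 2 :=
      Finset.single_le_sum (f := fun j => |(xi - xstar) j| ^ 2)
        (fun j _ => by positivity) (Finset.mem_univ k)
    have h1 : |(xi - xstar) k| ≤ ‖xi - xstar‖ := by
      rw [EuclideanSpace.norm_eq, ← Real.sqrt_sq (abs_nonneg ((xi - xstar) k))]
      exact Real.sqrt_le_sqrt hsum
    simpa using h1
  have ha : (0:ℝ) ≤ 2 * M * D / m := by positivity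
  have hsq : (2 * M * D / m) * h ^ 2 < |xi k - xstar k| ^ 2 := by
    have h0 : 0 ≤ Real.sqrt (2 * M * D / m) * h := by positivity
    have := mul_self_lt_mul_self h0 hk
    calc (2 * M * D / m) * h ^ 2
        = (Real.sqrt (2 * M * D / m) * h) * (Real.sqrt (2 * M * D / m) * h) := by
          rw [show (Real.sqrt (2 * M * D / m) * h) * (Real.sqrt (2 * M * D / m) * h)
            = Real.sqrt (2 * M * D / m) * Real.sqrt (2 * M * D / m) * (h * h) by ring,
            Real.mul_self_sqrt ha]; ring
      _ < |xi k - xstar k| * |xi k - xstar k| := this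
      _ = |xi k - xstar k| ^ 2 := by ring
  have hnorm_sq : (2 * M * D / m) * h ^ 2 < ‖xi - xstar‖ ^ 2 := by
    calc (2 * M * D / m) * h ^ 2 < |xi k - xstar k| ^ 2 := hsq
      _ ≤ ‖xi - xstar‖ ^ 2 := by
          apply pow_le_pow_left₀ (abs_nonneg _) hcoord
  have key : 2 * M * D * h ^ 2 < m * ‖xi - xstar‖ ^ 2 := by
    have := (mul_lt_mul_iff_right₀ hm).mpr hnorm_sq
    calc 2 * M * D * h ^ 2 = m * ((2 * M * D / m) * h ^ 2) := by field_simp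
      _ < m * ‖xi - xstar‖ ^ 2 := this
  have hsqD : Real.sqrt D ≤ D := by
    have h1 : (1:ℝ) ≤ D := by exact_mod_cast hD
    calc Real.sqrt D ≤ Real.sqrt (D * D) := by
          apply Real.sqrt_le_sqrt; nlinarith
      _ = D := by rw [Real.sqrt_mul_self (by positivity)]
  have hle : 2 * M * Real.sqrt D * h ^ 2 ≤ 2 * M * D * h ^ 2 := by
    have h2 : (0:ℝ) ≤ 2 * M * h ^ 2 := by positivity
    nlinarith [mul_le_mul_of_nonneg_left hsqD h2]
  linarith [hgr, key, hle, hub]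
end
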